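/- For Re(c-a-b) > 0, Re(c) > Re(b) > 0 and 0 < y < 1: ₂F₁(a,[b,c;y];1) = Γ(c)Γ(c-a-b)/(Γ(c-a)Γ(c-b)) − ((1-y)^{c-b-a} y^b / (B(b,c-b)(c-a-b))) · ₂F₁(c-a, 1; 1+c-b-a; 1-y). -/

import Mathlib

open Complex

/-- Incomplete beta function `B_y(x,z) = ∫_0^y t^(x-1) (1-t)^(z-1) dt`. -/
noncomputable def incBeta (y : ℝ) (x z : ℂ) : ℂ :=
  ∫ t in (0:ℝ)..y, (t:ℂ)^(x-1) * (1 - (t:ℂ))^(z-1)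

/-- Pochhammer symbol `(a)_n`. -/
noncomputable def poch (a : ℂ) (n : ℕ) : ℂ := ∏ i ∈ Finset.range n, (a + i)

/-- Incomplete Pochhammer ratio `[b,c;y]_n`. -/
noncomputable def ipochL (b c : ℂ) (y : ℝ) (n : ℕ) : ℂ :=
  incBeta y (b + n) (c - b) / Complex.betaIntegral b (c - b)

/-- Incomplete Pochhammer ratio `{b,c;y}_n`. -/
noncomputable def ipochU (b c : ℂ) (y : ℝ) (n : ℕ) : ℂ :=
  incBeta (1 - y) (c - b) (b + n) / Complex.betaIntegral b (c - b)

/-- Gauss hypergeometric series `₂F₁(a,b;c;x)`. -/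
noncomputable def hyp2F1 (a b c x : ℂ) : ℂ :=
  ∑' n : ℕ, poch a n * poch b n / poch c n * x^n / (n.factorial : ℂ)

/-- Incomplete Gauss hypergeometric function `₂F₁(a,[b,c;y];x)`. -/
noncomputable def inc2F1L (a b c : ℂ) (y : ℝ) (x : ℂ) : ℂ :=
  ∑' n : ℕ, poch a n * ipochL b c y n * x^n / (n.factorial : ℂ)

/-- Incomplete Gauss hypergeometric function `₂F₁(a,{b,c;y};x)`. -/
noncomputable def inc2F1U (a b c : ℂ) (y : ℝ) (x : ℂ) : ℂ :=
  ∑' n : ℕ, poch a n * ipochU b c y n * x^n / (n.factorial : ℂ)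

/-- Incomplete confluent hypergeometric function `₁F₁([a,b;y];x)`. -/
noncomputable def inc1F1L (a b : ℂ) (y : ℝ) (x : ℂ) : ℂ :=
  ∑' n : ℕ, ipochL a b y n * x^n / (n.factorial : ℂ)

/-- Incomplete confluent hypergeometric function `₁F₁({a,b;y};x)`. -/
noncomputable def inc1F1U (a b : ℂ) (y : ℝ) (x : ℂ) : ℂ :=
  ∑' n : ℕ, ipochU a b y n * x^n / (n.factorial : ℂ)

/-- Incomplete Appell function `F₁[a,b,c;d;x,z;y]`. -/
noncomputable def incAppellF1 (a b c d x z : ℂ) (y : ℝ) : ℂ :=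
  ∑' p : ℕ × ℕ, ipochL a d y (p.1 + p.2) * poch b p.1 * poch c p.2 *
    x^p.1 * z^p.2 / ((p.1.factorial : ℂ) * (p.2.factorial : ℂ))

/-- Incomplete Riemann–Liouville fractional derivative `D_z^μ[f(z);y]`. -/
noncomputable def incRL (μ : ℂ) (f : ℂ → ℂ) (y : ℝ) (z : ℂ) : ℂ :=
  z^(-μ) / Complex.Gamma (-μ) * ∫ u in (0:ℝ)..y, f ((u:ℂ) * z) * (1 - (u:ℂ))^(-μ-1)

/-!
Expanding `(1 - t)^(-a)` in its binomial series under the integral sign (dominated convergence,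
since `0 ≤ t ≤ y < 1`) gives `₂F₁(a,[b,c;y];1) = B_y(b, p) / B(b, c - b)` with `p = c - a - b`.
Splitting `B_y(b, p) = B(b, p) - B_{1-y}(p, b)`, the complete Beta quotient is the Gamma quotient.
For the tail, expanding `(1 - u)^(b - 1)` the same way gives
`B_w(p, b) = w^p ∑ (1-b)_n w^n / ((p + n) n!) = w^p ₂F₁(1-b, p; p+1; w) / p`, and Euler's
transformation `₂F₁(1-b, p; p+1; w) = (1-w)^b ₂F₁(p+b, 1; p+1; w)` finishes the proof. Euler's
transformation is checked coefficientwise on the Cauchy product with the binomial series of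
`(1-w)^b`, where it becomes a Chu–Vandermonde type identity proved by induction.
-/

lemma poch_zero (a : ℂ) : poch a 0 = 1 := Finset.prod_range_zero _

lemma poch_succ (a : ℂ) (n : ℕ) : poch a (n + 1) = poch a n * (a + n) :=
  Finset.prod_range_succ _ _

lemma poch_succ' (a : ℂ) (n : ℕ) : poch a (n + 1) = a * poch (a + 1) n := by
  simp only [poch, Finset.prod_range_succ', Nat.cast_add, Nat.cast_one, Nat.cast_zero, add_zero]
  ring_nf

lemma poch_one (n : ℕ) : poch 1 n = n.factorial := by
  induction n with
  | zero => simp [poch_zero]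
  | succ n ih => rw [poch_succ, ih]; push_cast [Nat.factorial_succ]; ring

lemma add_natCast_ne_zero {s : ℂ} (hs : 0 < s.re) (n : ℕ) : s + n ≠ 0 :=
  Complex.ne_zero_of_re_pos (by rw [Complex.add_re, Complex.natCast_re]; positivity)

lemma poch_ne_zero {s : ℂ} (hs : 0 < s.re) (n : ℕ) : poch s n ≠ 0 :=
  Finset.prod_ne_zero_iff.2 fun i _ => add_natCast_ne_zero hs i

lemma factorial_le_norm_poch {a : ℂ} (ha : 1 ≤ a.re) (n : ℕ) :
    (n.factorial : ℝ) ≤ ‖poch a n‖ := by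
  induction n with
  | zero => simp [poch_zero]
  | succ n ih =>
    rw [poch_succ, norm_mul, Nat.factorial_succ, Nat.cast_mul, mul_comm]
    gcongr
    calc ((n + 1 : ℕ) : ℝ) ≤ (a + n).re := by
          rw [Complex.add_re, Complex.natCast_re]; push_cast; linarith
      _ ≤ ‖a + n‖ := Complex.re_le_norm _

lemma poch_eq_ascPochhammer_eval (a : ℂ) (n : ℕ) : poch a n = (ascPochhammer ℂ n).eval a := by
  induction n with
  | zero => simp [poch_zero]
  | succ n ih => rw [poch_succ, ascPochhammer_succ_eval, ih]

lemma poch_div_factorial (a : ℂ) (n : ℕ) :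
    poch a n / n.factorial = Ring.choose (a + n - 1) n := by
  rw [Ring.choose_eq_smul, Polynomial.descPochhammer_smeval_eq_ascPochhammer,
    Polynomial.ascPochhammer_smeval_eq_eval, poch_eq_ascPochhammer_eval, smul_eq_mul,
    div_eq_inv_mul]
  ring_nf

lemma hasSum_poch_mul_pow_div_factorial (a : ℂ) {z : ℂ} (hz : ‖z‖ < 1) :
    HasSum (fun n => poch a n * z ^ n / n.factorial) ((1 - z) ^ (-a)) := by
  have h := (Complex.one_div_one_sub_cpow_hasFPowerSeriesOnBall_zero a).hasSum (y := z)
    (by rwa [mem_eball_zero_iff, ← ofReal_norm, ENNReal.ofReal_lt_one])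
  simp only [FormalMultilinearSeries.ofScalars_apply_eq, zero_add, smul_eq_mul] at h
  rw [Complex.cpow_neg, ← one_div]
  refine h.congr_fun fun n => ?_
  rw [← poch_div_factorial]; ring

lemma ofReal_cpow_add_natCast {t : ℝ} (ht : 0 < t) (s : ℂ) (n : ℕ) :
    (t : ℂ) ^ (s + n) = (t : ℂ) ^ s * (t : ℂ) ^ n := by
  rw [Complex.cpow_add _ _ (by exact_mod_cast ht.ne'), Complex.cpow_natCast]

lemma hasSum_beta_integrand_mul_poch_mul_pow_div_factorial (a b q : ℂ) {t : ℝ} (ht0 : 0 ≤ t)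
    (ht1 : t < 1) :
    HasSum (fun n => (t : ℂ) ^ (b - 1) * (1 - (t : ℂ)) ^ (q - 1) * (poch a n * t ^ n / n.factorial))
      ((t : ℂ) ^ (b - 1) * (1 - (t : ℂ)) ^ (q - 1 - a)) := by
  have hne : 1 - (t : ℂ) ≠ 0 := sub_ne_zero.2 <| by exact_mod_cast ht1.ne'
  have h := (hasSum_poch_mul_pow_div_factorial a (z := t) (by simpa [abs_of_nonneg ht0])).mul_left
    ((t : ℂ) ^ (b - 1) * (1 - (t : ℂ)) ^ (q - 1))
  rwa [mul_assoc, ← Complex.cpow_add _ _ hne, ← sub_eq_add_neg] at h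

lemma intervalIntegrable_beta_integrand {x q : ℂ} (hx : 0 < x.re) (hq : 0 < q.re) {y : ℝ}
    (hy0 : 0 ≤ y) (hy1 : y ≤ 1) :
    IntervalIntegrable (fun t : ℝ => (t : ℂ) ^ (x - 1) * (1 - (t : ℂ)) ^ (q - 1))
      MeasureTheory.volume 0 y :=
  (Complex.betaIntegral_convergent hx hq).mono_set <| by
    rw [Set.uIcc_of_le hy0, Set.uIcc_of_le zero_le_one]
    exact Set.Icc_subset_Icc le_rfl hy1

open intervalIntegral Interval in
theorem hasSum_poch_mul_incBeta (a : ℂ) {b q : ℂ} (hb : 0 < b.re) (hq : 0 < q.re) {y : ℝ}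
    (hy0 : 0 ≤ y) (hy1 : y < 1) :
    HasSum (fun n : ℕ => poch a n * incBeta y (b + n) q / n.factorial) (incBeta y b (q - a)) := by
  set g : ℝ → ℂ := fun t => (t : ℂ) ^ (b - 1) * (1 - (t : ℂ)) ^ (q - 1)
  set c : ℕ → ℂ → ℂ := fun n z => poch a n * z ^ n / n.factorial
  have hy : ‖(y : ℂ)‖ < 1 := by rwa [Complex.norm_real, Real.norm_of_nonneg hy0]
  have hIoc : ∀ t ∈ Ι 0 y, 0 < t ∧ t ≤ y := fun t ht => by rwa [Set.uIoc_of_le hy0] at ht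
  have hterm : ∀ n : ℕ, ∀ t ∈ Ι 0 y, (t : ℂ) ^ (b + n - 1) * (1 - (t : ℂ)) ^ (q - 1) *
      (poch a n / n.factorial) = g t * c n t := by
    intro n t ht
    rw [add_sub_right_comm, ofReal_cpow_add_natCast (hIoc t ht).1]
    ring
  have hlhs : ∀ n : ℕ, poch a n * incBeta y (b + n) q / n.factorial = ∫ t in 0..y,
      (t : ℂ) ^ (b + n - 1) * (1 - (t : ℂ)) ^ (q - 1) * (poch a n / n.factorial) := fun n => by
    rw [incBeta, integral_mul_const]; ring
  refine HasSum.congr_fun ?_ hlhs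
  rw [incBeta, sub_right_comm]
  refine hasSum_integral_of_dominated_convergence (fun n t => ‖g t‖ * ‖c n y‖) (fun n => ?meas)
    (fun n => ?bound) ?summable ?integrable ?lim
  case meas =>
    have hbn : 0 < (b + n).re := by rw [Complex.add_re, Complex.natCast_re]; positivity
    exact ((intervalIntegrable_beta_integrand hbn hq hy0 hy1.le).mul_const _).def'
      |>.aestronglyMeasurable
  case bound =>
    refine .of_forall fun t ht => ?_
    rw [hterm n t ht, norm_mul]
    gcongr
    simp only [c, norm_div, norm_mul, norm_pow, Complex.norm_real,
      Real.norm_of_nonneg (hIoc t ht).1.le, Real.norm_of_nonneg hy0]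
    gcongr
    exacts [(hIoc t ht).1.le, (hIoc t ht).2]
  case summable =>
    exact .of_forall fun t _ => (hasSum_poch_mul_pow_div_factorial a hy).summable.norm.mul_left _
  case integrable =>
    simp_rw [tsum_mul_left]
    exact (intervalIntegrable_beta_integrand hb hq hy0 hy1.le).norm.mul_const _
  case lim =>
    exact .of_forall fun t ht => (hasSum_beta_integrand_mul_poch_mul_pow_div_factorial a b q (hIoc t ht).1.le
      ((hIoc t ht).2.trans_lt hy1)).congr_fun (hterm · t ht)

lemma inc2F1L_one {a b c : ℂ} (hb : 0 < b.re) (hcb : 0 < (c - b).re) {y : ℝ} (hy0 : 0 ≤ y)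
    (hy1 : y < 1) :
    inc2F1L a b c y 1 = incBeta y b (c - b - a) / Complex.betaIntegral b (c - b) := by
  rw [← ((hasSum_poch_mul_incBeta a hb hcb hy0 hy1).div_const _).tsum_eq]
  simp only [inc2F1L, ipochL, one_pow, mul_one, mul_div_assoc', div_right_comm]

lemma incBeta_add_incBeta_one_sub {x z : ℂ} (hx : 0 < x.re) (hz : 0 < z.re) {y : ℝ}
    (hy0 : 0 ≤ y) (hy1 : y ≤ 1) :
    incBeta y x z + incBeta (1 - y) z x = Complex.betaIntegral x z := by
  have hflip : incBeta (1 - y) z x =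
      ∫ t in y..1, (t : ℂ) ^ (x - 1) * (1 - (t : ℂ)) ^ (z - 1) := by
    rw [incBeta, ← sub_self (1 : ℝ), ← intervalIntegral.integral_comp_sub_left]
    congr 1 with t
    push_cast
    rw [sub_sub_cancel, mul_comm]
  have hbeta := Complex.betaIntegral_convergent hx hz
  rw [hflip, incBeta, intervalIntegral.integral_add_adjacent_intervals, Complex.betaIntegral]
  · refine hbeta.mono_set ?_
    rw [Set.uIcc_of_le hy0, Set.uIcc_of_le zero_le_one]
    exact Set.Icc_subset_Icc le_rfl hy1
  · refine hbeta.mono_set ?_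
    rw [Set.uIcc_of_le hy1, Set.uIcc_of_le zero_le_one]
    exact Set.Icc_subset_Icc hy0 le_rfl

lemma incBeta_right_one {s : ℂ} (hs : 0 < s.re) (w : ℝ) : incBeta w s 1 = (w : ℂ) ^ s / s := by
  simp only [incBeta, sub_self, Complex.cpow_zero, mul_one]
  rw [integral_cpow (by left; rw [Complex.sub_re, Complex.one_re]; linarith), sub_add_cancel,
    Complex.ofReal_zero, Complex.zero_cpow (Complex.ne_zero_of_re_pos hs), sub_zero]

lemma sum_range_poch_neg_mul_poch_div_poch_succ (b : ℂ) (n : ℕ) {s : ℂ} (hs : 0 < s.re) :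
    ∑ k ∈ Finset.range (n + 1),
        poch (-b) k / k.factorial * (poch (s + b) (n - k) / poch s (n - k + 1))
      = poch (1 - b) n / (n.factorial * (s + n)) := by
  induction n generalizing s with
  | zero => simp [poch_zero, poch_succ]
  | succ n ih =>
    have hs1 : 0 < (s + 1).re := by rw [Complex.add_re, Complex.one_re]; linarith
    have hs0 : s ≠ 0 := Complex.ne_zero_of_re_pos hs
    have hshift : ∀ k ∈ Finset.range (n + 1),
        poch (-b) k / k.factorial * (poch (s + b) (n + 1 - k) / poch s (n + 1 - k + 1))
          = (s + b) / s * (poch (-b) k / k.factorial *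
            (poch (s + 1 + b) (n - k) / poch (s + 1) (n - k + 1))) := by
      intro k hk
      rw [show n + 1 - k = n - k + 1 by have := Finset.mem_range.1 hk; omega, poch_succ',
        poch_succ' s, show s + b + 1 = s + 1 + b by ring]
      have := poch_ne_zero hs1 (n - k + 1)
      field_simp
    rw [Finset.sum_range_succ, Finset.sum_congr rfl hshift, ← Finset.mul_sum, ih hs1,
      Nat.sub_self, poch_zero, zero_add, poch_succ' (-b), poch_succ (1 - b),
      show -b + 1 = 1 - b by ring, show poch s 1 = s by simp [poch]]
    have := add_natCast_ne_zero hs1 n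
    have := add_natCast_ne_zero hs (n + 1)
    push_cast [Nat.factorial_succ] at *
    field_simp
    ring

lemma norm_poch_mul_pow_div_poch_succ_le (c : ℂ) {p : ℂ} (hp : 0 < p.re) (w : ℂ) (m : ℕ) :
    ‖poch c m * w ^ m / poch p (m + 1)‖ ≤ ‖p‖⁻¹ * ‖poch c m * w ^ m / m.factorial‖ := by
  have hfac := factorial_le_norm_poch (a := p + 1)
    (by rw [Complex.add_re, Complex.one_re]; linarith) m
  have hp0 : 0 < ‖p‖ := norm_pos_iff.2 (Complex.ne_zero_of_re_pos hp)
  rw [poch_succ', norm_div, norm_div, norm_mul p, Complex.norm_natCast]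
  calc ‖poch c m * w ^ m‖ / (‖p‖ * ‖poch (p + 1) m‖)
      ≤ ‖poch c m * w ^ m‖ / (‖p‖ * m.factorial) := by gcongr
    _ = ‖p‖⁻¹ * (‖poch c m * w ^ m‖ / m.factorial) := by ring

lemma hasSum_poch_mul_pow_div_poch_succ (c : ℂ) {p : ℂ} (hp : 0 < p.re) {w : ℂ} (hw : ‖w‖ < 1) :
    HasSum (fun m => poch c m * w ^ m / poch p (m + 1)) (hyp2F1 c 1 (p + 1) w / p) := by
  have hsum : Summable (fun m => poch c m * w ^ m / poch p (m + 1)) :=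
    .of_norm <| .of_nonneg_of_le (fun _ => norm_nonneg _)
      (norm_poch_mul_pow_div_poch_succ_le c hp w)
      ((hasSum_poch_mul_pow_div_factorial c hw).summable.norm.mul_left _)
  have hp0 := Complex.ne_zero_of_re_pos hp
  convert hsum.hasSum using 1
  rw [hyp2F1, div_eq_iff hp0, ← tsum_mul_right]
  congr 1 with m
  have := poch_ne_zero (s := p + 1) (by rw [Complex.add_re, Complex.one_re]; linarith) m
  have := Nat.cast_ne_zero (R := ℂ) |>.2 m.factorial_ne_zero
  rw [poch_one, poch_succ']
  field_simp

/-- Euler's transformation `₂F₁(1-b, p; p+1; w) = (1-w)^b ₂F₁(p+b, 1; p+1; w)`, divided by `p`. -/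
theorem hasSum_poch_one_sub_mul_pow_div (b : ℂ) {p : ℂ} (hp : 0 < p.re) {w : ℂ} (hw : ‖w‖ < 1) :
    HasSum (fun n => poch (1 - b) n * w ^ n / (p + n) / n.factorial)
      ((1 - w) ^ b * (hyp2F1 (p + b) 1 (p + 1) w / p)) := by
  have hA := hasSum_poch_mul_pow_div_factorial (-b) hw
  have hB := hasSum_poch_mul_pow_div_poch_succ (p + b) hp hw
  have hprod := hasSum_sum_range_mul_of_summable_norm hA.summable.norm hB.summable.norm
  rw [hA.tsum_eq, hB.tsum_eq, neg_neg] at hprod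
  refine hprod.congr_fun fun n => ?_
  rw [div_div, mul_comm ((p : ℂ) + n), mul_div_right_comm,
    ← sum_range_poch_neg_mul_poch_div_poch_succ b n hp, Finset.sum_mul]
  refine Finset.sum_congr rfl fun k hk => ?_
  rw [← pow_mul_pow_sub w (Finset.mem_range_succ_iff.1 hk)]
  ring

theorem incBeta_eq_hyp2F1 (b : ℂ) {p : ℂ} (hp : 0 < p.re) {w : ℝ} (hw0 : 0 < w) (hw1 : w < 1) :
    incBeta w p b = (w : ℂ) ^ p * (1 - (w : ℂ)) ^ b / p * hyp2F1 (p + b) 1 (p + 1) w := by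
  have hw : ‖(w : ℂ)‖ < 1 := by rwa [Complex.norm_real, Real.norm_of_nonneg hw0.le]
  have hexp := hasSum_poch_mul_incBeta (1 - b) hp (q := 1) (by simp) hw0.le hw1
  rw [sub_sub_cancel] at hexp
  refine hexp.unique (((hasSum_poch_one_sub_mul_pow_div b hp hw).mul_left ((w : ℂ) ^ p)).congr_fun
    fun n => ?_) |>.trans (by ring)
  rw [incBeta_right_one (by rw [Complex.add_re, Complex.natCast_re]; positivity),
    ofReal_cpow_add_natCast hw0]
  ring

theorem stmt8 (a b c : ℂ) (y : ℝ) (hcab : 0 < (c - a - b).re)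
    (hb : 0 < b.re) (hbc : b.re < c.re) (hy0 : 0 < y) (hy1 : y < 1) :
    inc2F1L a b c y 1 =
      Complex.Gamma c * Complex.Gamma (c - a - b) /
        (Complex.Gamma (c - a) * Complex.Gamma (c - b)) -
      ((1 - (y:ℂ))^(c - b - a) * (y:ℂ)^b /
        (Complex.betaIntegral b (c - b) * (c - a - b))) *
      hyp2F1 (c - a) 1 (1 + c - b - a) (1 - (y:ℂ)) := by
  have hcb : 0 < (c - b).re := by rw [Complex.sub_re]; linarith
  have htail : incBeta (1 - y) (c - a - b) b = (1 - (y : ℂ)) ^ (c - a - b) * (y : ℂ) ^ b /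
      (c - a - b) * hyp2F1 (c - a) 1 (1 + c - b - a) (1 - (y : ℂ)) := by
    rw [incBeta_eq_hyp2F1 b hcab (by linarith) (by linarith), Complex.ofReal_sub,
      Complex.ofReal_one, sub_sub_cancel, show c - a - b + b = c - a by ring,
      show c - a - b + 1 = 1 + c - b - a by ring]
  have hratio : Complex.betaIntegral b (c - a - b) / Complex.betaIntegral b (c - b) =
      Complex.Gamma c * Complex.Gamma (c - a - b) /
        (Complex.Gamma (c - a) * Complex.Gamma (c - b)) := by
    have := Complex.Gamma_ne_zero_of_re_pos hb
    have := Complex.Gamma_ne_zero_of_re_pos hcb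
    have := Complex.Gamma_ne_zero_of_re_pos (show 0 < c.re by linarith)
    have := Complex.Gamma_ne_zero_of_re_pos (show 0 < (c - a).re by
      rw [Complex.sub_re, Complex.sub_re] at hcab; rw [Complex.sub_re]; linarith)
    rw [Complex.betaIntegral_eq_Gamma_mul_div _ _ hb hcab,
      Complex.betaIntegral_eq_Gamma_mul_div _ _ hb hcb, show b + (c - a - b) = c - a by ring,
      add_sub_cancel]
    field_simp
  rw [inc2F1L_one hb hcb hy0.le hy1, sub_right_comm c b a,
    eq_sub_of_add_eq (incBeta_add_incBeta_one_sub hb hcab hy0.le hy1.le), htail, sub_div, hratio,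
    mul_comm (Complex.betaIntegral b (c - b)),
    ← div_div ((1 - (y : ℂ)) ^ (c - a - b) * (y : ℂ) ^ b)]
  ring
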